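/- Let 𝔽 be a field, m ≥ 1, k ≥ 1, and let P(λ) = Σ_{i=0}^{2k−1} P_i λ^i be an m×m T-palindromic matrix polynomial of degree 2k−1 over 𝔽, i.e. P_i = (P_{2k−1−i})ᵀ for all i. Define M ∈ 𝔽^{km×km} as the block matrix with m×m blocks given by M_{i,k} = (P_{i−1})ᵀ for i = 1,…,k and all other blocks zero. Then the pencil ℒ(λ) := [[λM + Mᵀ, L_φ(λ)ᵀ ⊗ I_m],[L_ψ(λ) ⊗ I_m, 0]], where L_φ(λ) is the (k−1)×k pencil with entries 1 in position (r,r) and −λ in position (r,r+1) and L_ψ(λ) is the (k−1)×k pencil with entries λ in position (r,r) and −1 in position (r,r+1), is T-palindromic (ℒ(λ) = rev ℒ(λ)ᵀ with rev ℒ(λ) := λ·ℒ(1/λ)) and is a linearization for P(λ). -/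

import Mathlib

/-!
Write `k = n + 1` and let `T = (λ^(i-j))_{i ≥ j} ⊗ I_m`, a lower unitriangular Toeplitz matrix.
Its inverse is the bidiagonal `(I - λN) ⊗ I_m`, `N` the down-shift, hence
`T (L_φᵀ ⊗ I_m) = [I; 0]` and `(L_ψ ⊗ I_m) T = -[0 I]`: conjugating `ℒ` by `diag(T, I)` leaves
constant selection matrices off the diagonal. The entry of `T (λM + Mᵀ) T` in the last block row
and first block column is `∑ₚ λ^(2k-1-p) P_pᵀ + ∑_q λ^q P_q`, which is `P(λ)` by
T-palindromicity. Block elimination against the two selection matrices clears the rest of the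
top-left block, and what is left is a permutation of `diag(I, P(λ))`.
-/

open Polynomial Matrix

namespace PaperLin

variable {F : Type*} [Field F]

/-- A square matrix polynomial is *unimodular* if its determinant is a
nonzero constant of the field. -/
def Unimodular {ι : Type*} [Fintype ι] [DecidableEq ι]
    (E : Matrix ι ι (Polynomial F)) : Prop :=
  ∃ c : F, c ≠ 0 ∧ E.det = Polynomial.C c

/-- `L` is a linearization of `P`: `L` is extended unimodularly equivalent to
`P`, i.e. `E(λ) ⬝ diag(I_r, L(λ)) ⬝ G(λ) = diag(I_s, P(λ))` for some unimodular
`E`, `G` (up to bijections of the index sets). -/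
def IsLinearization {ι₁ ι₂ κ : Type*} [Fintype ι₁] [DecidableEq ι₁]
    [Fintype ι₂] [DecidableEq ι₂] [Fintype κ] [DecidableEq κ]
    (L : Matrix ι₁ ι₂ (Polynomial F)) (P : Matrix κ κ (Polynomial F)) : Prop :=
  ∃ (r s : ℕ)
    (E : Matrix (Fin r ⊕ ι₁) (Fin r ⊕ ι₁) (Polynomial F))
    (G : Matrix (Fin r ⊕ ι₂) (Fin r ⊕ ι₂) (Polynomial F))
    (e₁ : (Fin r ⊕ ι₁) ≃ (Fin s ⊕ κ)) (e₂ : (Fin r ⊕ ι₂) ≃ (Fin s ⊕ κ)),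
    Unimodular E ∧ Unimodular G ∧
    E * Matrix.fromBlocks (1 : Matrix (Fin r) (Fin r) (Polynomial F)) 0 0 L * G =
      Matrix.reindex e₁.symm e₂.symm (Matrix.fromBlocks 1 0 0 P)

open scoped Kronecker

theorem unimodular_of_isUnit_det {ι : Type*} [Fintype ι] [DecidableEq ι]
    {E : Matrix ι ι F[X]} (h : IsUnit E.det) : Unimodular E := by
  obtain ⟨c, hc, hcE⟩ := Polynomial.isUnit_iff.mp h
  exact ⟨c, hc.ne_zero, hcE.symm⟩

theorem unimodular_fromBlocks_one {ι : Type*} [Fintype ι] [DecidableEq ι] {E : Matrix ι ι F[X]}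
    (hE : Unimodular E) (r : ℕ) :
    Unimodular (fromBlocks (1 : Matrix (Fin r) (Fin r) F[X]) 0 0 E) := by
  obtain ⟨c, hc, hdet⟩ := hE
  exact ⟨c, hc, by rw [det_fromBlocks_zero₂₁, det_one, one_mul, hdet]⟩

theorem isLinearization_of_mul_eq_reindex {ι₁ ι₂ κ σ : Type*} [Fintype ι₁] [DecidableEq ι₁]
    [Fintype ι₂] [DecidableEq ι₂] [Fintype κ] [DecidableEq κ] [Fintype σ] [DecidableEq σ]
    {L : Matrix ι₁ ι₂ F[X]} {P : Matrix κ κ F[X]} {E : Matrix ι₁ ι₁ F[X]}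
    {G : Matrix ι₂ ι₂ F[X]} (hE : Unimodular E) (hG : Unimodular G)
    (e₁ : ι₁ ≃ σ ⊕ κ) (e₂ : ι₂ ≃ σ ⊕ κ)
    (h : E * L * G = reindex e₁.symm e₂.symm (fromBlocks 1 0 0 P)) :
    IsLinearization L P := by
  refine ⟨0, Fintype.card σ, fromBlocks 1 0 0 E, fromBlocks 1 0 0 G,
    (Equiv.emptySum _ _).trans (e₁.trans ((Fintype.equivFin σ).sumCongr (Equiv.refl κ))),
    (Equiv.emptySum _ _).trans (e₂.trans ((Fintype.equivFin σ).sumCongr (Equiv.refl κ))),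
    unimodular_fromBlocks_one hE 0, unimodular_fromBlocks_one hG 0, ?_⟩
  simp only [fromBlocks_multiply, Matrix.mul_zero, Matrix.zero_mul, Matrix.mul_one, add_zero,
    zero_add, h]
  refine Matrix.ext fun x y => ?_
  rcases x with x | x
  · exact x.elim0
  rcases y with y | y
  · exact y.elim0
  simp only [fromBlocks_apply₂₂, reindex_apply, submatrix_apply, Equiv.symm_symm,
    Equiv.trans_apply, Equiv.emptySum_apply_inr]
  rcases e₁ x with s | a <;> rcases e₂ y with t | b <;> simp [one_apply]

section BlockElimination

variable {R ι κ : Type*} [Fintype ι] [Fintype κ] [DecidableEq κ]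

theorem fromBlocks_conj_diagonal_blocks [Semiring R] (T T' A : Matrix ι ι R) (B : Matrix ι κ R)
    (C : Matrix κ ι R) :
    fromBlocks T 0 0 1 * fromBlocks A B C 0 * fromBlocks T' 0 0 1 =
      fromBlocks (T * A * T') (T * B) (C * T') 0 := by
  simp [fromBlocks_multiply]

theorem fromBlocks_eliminate [Ring R] [DecidableEq ι] (A Q₁ Q₂ : Matrix ι ι R) (B : Matrix ι κ R)
    (C B' : Matrix κ ι R) (C' : Matrix ι κ R) (hB : B * B' + Q₂ = 1) (hC : C' * C + Q₁ = 1) :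
    fromBlocks 1 (-(Q₂ * A * C')) 0 (-1) * fromBlocks A B C 0 * fromBlocks 1 0 (-(B' * A)) 1 =
      fromBlocks (Q₂ * A * Q₁) B (-C) 0 := by
  obtain rfl : Q₂ = 1 - B * B' := eq_sub_of_add_eq' hB
  obtain rfl : Q₁ = 1 - C' * C := eq_sub_of_add_eq' hC
  simp only [fromBlocks_multiply]
  congr 1 <;> simp [Matrix.sub_mul, Matrix.mul_sub, Matrix.mul_assoc]
  abel

end BlockElimination

theorem neg_kronecker {R l m n p : Type*} [Ring R] (A : Matrix l m R) (B : Matrix n p R) :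
    (-A) ⊗ₖ B = -(A ⊗ₖ B) := by
  ext
  simp

theorem kronecker_one_mul_mul_kronecker_one_apply {R ι ι' κ κ' μ : Type*} [Semiring R]
    [Fintype ι'] [Fintype κ'] [Fintype μ] [DecidableEq μ] (S : Matrix ι ι' R)
    (A : Matrix (ι' × μ) (κ' × μ) R) (S' : Matrix κ' κ R) (i : ι) (a : μ) (j : κ) (b : μ) :
    ((S ⊗ₖ (1 : Matrix μ μ R)) * A * (S' ⊗ₖ (1 : Matrix μ μ R))) (i, a) (j, b) =
      ∑ p, ∑ q, S i p * A (p, a) (q, b) * S' q j := by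
  simp [mul_apply, Fintype.sum_prod_type, one_apply, Finset.sum_mul]
  exact Finset.sum_comm

theorem sum_range_two_mul {M : Type*} [AddCommMonoid M] (f : ℕ → M) (k : ℕ) :
    ∑ i ∈ Finset.range (2 * k), f i =
      ∑ i ∈ Finset.range k, f i + ∑ i ∈ Finset.range k, f (2 * k - 1 - i) := by
  rw [two_mul, Finset.sum_range_add, ← Finset.sum_range_reflect (fun i => f (k + i)) k]
  refine congrArg _ (Finset.sum_congr rfl fun i hi => congrArg f ?_)
  have := Finset.mem_range.mp hi
  omega

section Selection

variable {R : Type*} [Semiring R] {m n : ℕ}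

variable (R) in
def selectCastSucc (n : ℕ) : Matrix (Fin n) (Fin (n + 1)) R :=
  of fun r c => if c = r.castSucc then 1 else 0

variable (R) in
def selectSucc (n : ℕ) : Matrix (Fin n) (Fin (n + 1)) R :=
  of fun r c => if c = r.succ then 1 else 0

theorem transpose_selectCastSucc_mul_add_single :
    (selectCastSucc R n)ᵀ * selectCastSucc R n + single (Fin.last n) (Fin.last n) 1 = 1 := by
  ext i j
  rw [Matrix.add_apply, mul_apply]
  cases i using Fin.lastCases <;> cases j using Fin.lastCases <;>
    simp [selectCastSucc, one_apply, eq_comm (a := Fin.last n), Fin.castSucc_ne_last]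

theorem transpose_selectSucc_mul_add_single :
    (selectSucc R n)ᵀ * selectSucc R n + single 0 0 1 = 1 := by
  ext i j
  rw [Matrix.add_apply, mul_apply]
  cases i using Fin.cases <;> cases j using Fin.cases <;>
    simp [selectSucc, one_apply, eq_comm (a := (0 : Fin (n + 1))), Fin.succ_ne_zero]

-- The last block row and the first block column go to the `Fin m` summand, where `P(λ)` sits;
-- the other rows and columns are paired as the two selection matrices pair them.
def rowEquiv (n m : ℕ) :
    (Fin (n + 1) × Fin m) ⊕ (Fin n × Fin m) ≃ ((Fin n × Fin m) ⊕ (Fin n × Fin m)) ⊕ Fin m :=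
  (((finSuccEquivLast.prodCongr (Equiv.refl _)).trans optionProdEquiv).sumCongr
    (Equiv.refl _)).trans ((Equiv.sumAssoc _ _ _).trans (Equiv.sumComm _ _))

def colEquiv (n m : ℕ) :
    (Fin (n + 1) × Fin m) ⊕ (Fin n × Fin m) ≃ ((Fin n × Fin m) ⊕ (Fin n × Fin m)) ⊕ Fin m :=
  ((((finSuccEquiv n).prodCongr (Equiv.refl _)).trans optionProdEquiv).sumCongr
    (Equiv.refl _)).trans ((Equiv.sumAssoc _ _ _).trans
      ((Equiv.sumComm _ _).trans ((Equiv.sumComm _ _).sumCongr (Equiv.refl _))))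

theorem fromBlocks_eq_reindex_rowEquiv_colEquiv
    (Pm : Matrix (Fin m) (Fin m) R) (K : Matrix (Fin (n + 1) × Fin m) (Fin (n + 1) × Fin m) R)
    (hK : ∀ i a j b, K (i, a) (j, b) = if i = Fin.last n ∧ j = 0 then Pm a b else 0) :
    fromBlocks K ((selectCastSucc R n)ᵀ ⊗ₖ (1 : Matrix (Fin m) (Fin m) R))
        (selectSucc R n ⊗ₖ (1 : Matrix (Fin m) (Fin m) R)) 0 =
      reindex (rowEquiv n m).symm (colEquiv n m).symm (fromBlocks 1 0 0 Pm) := by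
  rw [← reindex_symm, Equiv.eq_symm_apply]
  ext (⟨⟨p, a⟩ | ⟨r, a⟩⟩ | a) (⟨⟨s, b⟩ | ⟨q, b⟩⟩ | b)
  all_goals simp [rowEquiv, colEquiv, hK, selectCastSucc, selectSucc, one_apply,
    eq_comm (a := (0 : Fin (n + 1))), eq_comm (a := Fin.last n), Fin.castSucc_ne_last,
    Fin.succ_ne_zero]
  all_goals split_ifs <;> simp_all

theorem single_mul_mul_single_kronecker_one_apply
    (K : Matrix (Fin (n + 1) × Fin m) (Fin (n + 1) × Fin m) R) (i : Fin (n + 1)) (a : Fin m)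
    (j : Fin (n + 1)) (b : Fin m) :
    ((single (Fin.last n) (Fin.last n) (1 : R) ⊗ₖ (1 : Matrix (Fin m) (Fin m) R)) * K *
        (single (0 : Fin (n + 1)) (0 : Fin (n + 1)) (1 : R) ⊗ₖ (1 : Matrix (Fin m) (Fin m) R)))
        (i, a) (j, b) =
      if i = Fin.last n ∧ j = 0 then K (Fin.last n, a) (0, b) else 0 := by
  rw [kronecker_one_mul_mul_kronecker_one_apply]
  simp [single_apply, eq_comm (a := Fin.last n), eq_comm (a := (0 : Fin (n + 1))), ite_and]
  split_ifs <;> rfl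

end Selection

section Toeplitz

variable {R : Type*} [CommRing R] (x : R)

def powToeplitz (k : ℕ) : Matrix (Fin k) (Fin k) R :=
  of fun i j => if j ≤ i then x ^ ((i : ℕ) - j) else 0

def Lφ (n : ℕ) : Matrix (Fin n) (Fin (n + 1)) R :=
  of fun r c => if (c : ℕ) = r then 1 else if (c : ℕ) = r + 1 then -x else 0

def Lψ (n : ℕ) : Matrix (Fin n) (Fin (n + 1)) R :=
  of fun r c => if (c : ℕ) = r then x else if (c : ℕ) = r + 1 then -1 else 0

theorem powToeplitz_apply (k : ℕ) (i j : Fin k) :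
    powToeplitz x k i j = if (j : ℕ) ≤ i then x ^ ((i : ℕ) - j) else 0 := rfl

theorem det_powToeplitz (k : ℕ) : (powToeplitz x k).det = 1 := by
  have hlower : (powToeplitz x k).IsLowerTriangular := fun i j hij =>
    if_neg (OrderDual.toDual_lt_toDual.mp hij).not_ge
  rw [det_of_isLowerTriangular _ hlower]
  simp [powToeplitz]

theorem pow_sub_eq_pow_sub_succ_mul {a b : ℕ} (h : b < a) :
    x ^ (a - b) = x ^ (a - (b + 1)) * x := by
  rw [Nat.sub_add_eq, pow_sub_one_mul (by omega)]

theorem powToeplitz_row_recurrence (i j : ℕ) :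
    ((if j ≤ i then x ^ (i - j) else 0) - x * if j + 1 ≤ i then x ^ (i - (j + 1)) else 0) =
      if i = j then 1 else 0 := by
  rcases lt_trichotomy i j with h | rfl | h
  · simp [h.ne, not_le.mpr h, not_le.mpr (h.trans (Nat.lt_succ_self j))]
  · simp
  · simp [h.le, Nat.succ_le_of_lt h, h.ne', pow_sub_eq_pow_sub_succ_mul x h, mul_comm]

theorem powToeplitz_col_recurrence (i j : ℕ) :
    (x * (if j ≤ i then x ^ (i - j) else 0) - if j ≤ i + 1 then x ^ (i + 1 - j) else 0) =
      if j = i + 1 then -1 else 0 := by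
  rcases lt_trichotomy j (i + 1) with h | h | h
  · simp [Nat.le_of_lt_succ h, h.le, h.ne, pow_sub_eq_pow_sub_succ_mul x h, mul_comm]
  · simp [h]
  · simp [h.ne', not_le.mpr h, not_le.mpr (Nat.lt_of_succ_lt h)]

theorem powToeplitz_mul_transpose_Lφ (n : ℕ) :
    powToeplitz x (n + 1) * (Lφ x n)ᵀ = (selectCastSucc R n)ᵀ := by
  ext i s
  rw [mul_apply, Fintype.sum_eq_add s.castSucc s.succ Fin.castSucc_lt_succ.ne]
  · simpa [powToeplitz_apply, Lφ, selectCastSucc, Fin.ext_iff, sub_eq_add_neg, mul_comm, neg_ite]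
      using powToeplitz_row_recurrence x i s
  · rintro v ⟨h₁, h₂⟩
    rw [Ne, Fin.ext_iff] at h₁ h₂
    simp_all [Lφ]

theorem Lψ_mul_powToeplitz (n : ℕ) :
    Lψ x n * powToeplitz x (n + 1) = -selectSucc R n := by
  ext r q
  rw [mul_apply, Fintype.sum_eq_add r.castSucc r.succ Fin.castSucc_lt_succ.ne]
  · simpa [powToeplitz_apply, Lψ, selectSucc, Fin.ext_iff, sub_eq_add_neg, mul_comm, neg_ite]
      using powToeplitz_col_recurrence x r q
  · rintro v ⟨h₁, h₂⟩
    rw [Ne, Fin.ext_iff] at h₁ h₂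
    simp_all [Lψ]

end Toeplitz

section Pencil

variable {m n : ℕ}

noncomputable def palindromicBlock {ι : Type*} (M : Matrix ι ι F) : Matrix ι ι F[X] :=
  (X : F[X]) • M.map C + Mᵀ.map C

variable (F) in
noncomputable def toeplitzBlock (n m : ℕ) :
    Matrix (Fin (n + 1) × Fin m) (Fin (n + 1) × Fin m) F[X] :=
  powToeplitz X (n + 1) ⊗ₖ (1 : Matrix (Fin m) (Fin m) F[X])

def lastBlockColumn (P : ℕ → Matrix (Fin m) (Fin m) F) (n : ℕ) :
    Matrix (Fin (n + 1) × Fin m) (Fin (n + 1) × Fin m) F :=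
  of fun p q => if (q.1 : ℕ) = n then P p.1 q.2 p.2 else 0

noncomputable def pencil (M : Matrix (Fin (n + 1) × Fin m) (Fin (n + 1) × Fin m) F) :
    Matrix ((Fin (n + 1) × Fin m) ⊕ (Fin n × Fin m)) ((Fin (n + 1) × Fin m) ⊕ (Fin n × Fin m))
      F[X] :=
  fromBlocks (palindromicBlock M) ((Lφ X n)ᵀ ⊗ₖ (1 : Matrix (Fin m) (Fin m) F[X]))
    (Lψ X n ⊗ₖ (1 : Matrix (Fin m) (Fin m) F[X])) 0

noncomputable def matrixPolynomial (P : ℕ → Matrix (Fin m) (Fin m) F) (d : ℕ) :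
    Matrix (Fin m) (Fin m) F[X] :=
  of fun a b => ∑ i ∈ Finset.range d, C (P i a b) * X ^ i

theorem pencil_eq_rev_transpose (M : Matrix (Fin (n + 1) × Fin m) (Fin (n + 1) × Fin m) F) :
    pencil M =
      (of fun i j => C ((pencil M i j).coeff 1) + X * C ((pencil M i j).coeff 0))ᵀ := by
  refine Matrix.ext fun i j => ?_
  rcases i with ⟨p, a⟩ | ⟨r, a⟩ <;> rcases j with ⟨q, b⟩ | ⟨s, b⟩
  · simp [pencil, palindromicBlock, add_comm]
  · simp [pencil, Lφ, Lψ, one_apply]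
    split_ifs <;> simp_all [coeff_one]
  · simp [pencil, Lφ, Lψ, one_apply]
    split_ifs <;> simp_all [coeff_one]
  · simp [pencil]

theorem toeplitzBlock_conj_palindromicBlock_apply_last_zero (P : ℕ → Matrix (Fin m) (Fin m) F)
    (hpal : ∀ i ≤ 2 * (n + 1) - 1, P i = (P (2 * (n + 1) - 1 - i))ᵀ) (a b : Fin m) :
    (toeplitzBlock F n m * palindromicBlock (lastBlockColumn P n) * toeplitzBlock F n m)
        (Fin.last n, a) (0, b) =
      matrixPolynomial P (2 * (n + 1)) a b := by
  rw [toeplitzBlock, kronecker_one_mul_mul_kronecker_one_apply]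
  have hlast (q : Fin (n + 1)) : (q : ℕ) = n ↔ q = Fin.last n := by simp [Fin.ext_iff]
  calc
    _ = ∑ p : Fin (n + 1), X ^ (n - p) * (C (P p b a) * X) * X ^ n +
        ∑ q : Fin (n + 1), C (P q a b) * X ^ (q : ℕ) := by
      simp only [powToeplitz_apply, palindromicBlock, lastBlockColumn, Matrix.add_apply,
        Matrix.smul_apply, map_apply, transpose_apply, of_apply, hlast]
      simp [Fin.is_le, apply_ite C, mul_add, add_mul, ite_mul, mul_ite, Finset.sum_add_distrib]
    _ = matrixPolynomial P (2 * (n + 1)) a b := by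
      -- by T-palindromicity the `λM` part supplies the coefficients of degree `≥ n + 1`
      rw [matrixPolynomial, of_apply, sum_range_two_mul, add_comm,
        Fin.sum_univ_eq_sum_range (fun i => C (P i a b) * X ^ i),
        Fin.sum_univ_eq_sum_range (fun p => X ^ (n - p) * (C (P p b a) * X) * X ^ n)]
      refine congrArg _ (Finset.sum_congr rfl fun i hi => ?_)
      have hi := Finset.mem_range.mp hi
      rw [hpal i (by omega), transpose_apply, show 2 * (n + 1) - 1 - i = n - i + 1 + n by omega]
      ring

theorem toeplitzBlock_conj_pencil (M : Matrix (Fin (n + 1) × Fin m) (Fin (n + 1) × Fin m) F) :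
    fromBlocks (toeplitzBlock F n m) 0 0 1 * pencil M * fromBlocks (toeplitzBlock F n m) 0 0 1 =
      fromBlocks (toeplitzBlock F n m * palindromicBlock M * toeplitzBlock F n m)
        ((selectCastSucc F[X] n)ᵀ ⊗ₖ (1 : Matrix (Fin m) (Fin m) F[X]))
        (-(selectSucc F[X] n ⊗ₖ (1 : Matrix (Fin m) (Fin m) F[X]))) 0 := by
  rw [pencil, fromBlocks_conj_diagonal_blocks, toeplitzBlock, ← mul_kronecker_mul,
    ← mul_kronecker_mul, powToeplitz_mul_transpose_Lφ, Lψ_mul_powToeplitz, neg_kronecker,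
    Matrix.one_mul]

theorem isLinearization_pencil (P : ℕ → Matrix (Fin m) (Fin m) F)
    (hpal : ∀ i ≤ 2 * (n + 1) - 1, P i = (P (2 * (n + 1) - 1 - i))ᵀ) :
    IsLinearization (pencil (lastBlockColumn P n)) (matrixPolynomial P (2 * (n + 1))) := by
  set T := toeplitzBlock F n m
  set Â := T * palindromicBlock (lastBlockColumn P n) * T
  set B := (selectCastSucc F[X] n)ᵀ ⊗ₖ (1 : Matrix (Fin m) (Fin m) F[X])
  set B' := selectCastSucc F[X] n ⊗ₖ (1 : Matrix (Fin m) (Fin m) F[X])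
  set S := selectSucc F[X] n ⊗ₖ (1 : Matrix (Fin m) (Fin m) F[X])
  set S' := (selectSucc F[X] n)ᵀ ⊗ₖ (1 : Matrix (Fin m) (Fin m) F[X])
  set Q₁ := single (0 : Fin (n + 1)) (0 : Fin (n + 1)) (1 : F[X]) ⊗ₖ
    (1 : Matrix (Fin m) (Fin m) F[X])
  set Q₂ := single (Fin.last n) (Fin.last n) (1 : F[X]) ⊗ₖ (1 : Matrix (Fin m) (Fin m) F[X])
  have hB : B * B' + Q₂ = 1 := by
    rw [← mul_kronecker_mul, Matrix.one_mul, ← add_kronecker,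
      transpose_selectCastSucc_mul_add_single, one_kronecker_one]
  have hS : -S' * -S + Q₁ = 1 := by
    rw [Matrix.neg_mul, Matrix.mul_neg, neg_neg, ← mul_kronecker_mul, Matrix.one_mul,
      ← add_kronecker, transpose_selectSucc_mul_add_single, one_kronecker_one]
  have hT : T.det = 1 := by simp [T, toeplitzBlock, det_kronecker, det_powToeplitz]
  refine isLinearization_of_mul_eq_reindex
    (E := fromBlocks 1 (-(Q₂ * Â * -S')) 0 (-1) * fromBlocks T 0 0 1)
    (G := fromBlocks T 0 0 1 * fromBlocks 1 0 (-(B' * Â)) 1)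
    ?_ ?_ (rowEquiv n m) (colEquiv n m) ?_
  · refine unimodular_of_isUnit_det ?_
    simpa [det_fromBlocks_zero₂₁, hT, det_neg] using isUnit_neg_one.pow _
  · refine unimodular_of_isUnit_det ?_
    simp [hT]
  calc _ = fromBlocks 1 (-(Q₂ * Â * -S')) 0 (-1) *
        (fromBlocks T 0 0 1 * pencil (lastBlockColumn P n) * fromBlocks T 0 0 1) *
        fromBlocks 1 0 (-(B' * Â)) 1 := by simp only [Matrix.mul_assoc]
    _ = fromBlocks (Q₂ * Â * Q₁) B S 0 := by
      rw [toeplitzBlock_conj_pencil, fromBlocks_eliminate _ _ _ _ _ _ _ hB hS, neg_neg]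
    _ = _ := by
      refine fromBlocks_eq_reindex_rowEquiv_colEquiv _ _ fun i a j b => ?_
      rw [single_mul_mul_single_kronecker_one_apply,
        ← toeplitzBlock_conj_palindromicBlock_apply_last_zero P hpal]

end Pencil

theorem statement16_general (m k : ℕ) (hk : 1 ≤ k)
    (P : ℕ → Matrix (Fin m) (Fin m) F)
    (hpal : ∀ i ≤ 2 * k - 1, P i = (P (2 * k - 1 - i))ᵀ) :
    let M : Matrix (Fin k × Fin m) (Fin k × Fin m) F :=
      Matrix.of fun p q =>
        if (q.1 : ℕ) = k - 1 then P (p.1 : ℕ) q.2 p.2 else 0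
    let Lφ : Matrix (Fin (k - 1)) (Fin k) (Polynomial F) :=
      Matrix.of fun r c =>
        if (c : ℕ) = (r : ℕ) then 1
        else if (c : ℕ) = (r : ℕ) + 1 then -Polynomial.X
        else 0
    let Lψ : Matrix (Fin (k - 1)) (Fin k) (Polynomial F) :=
      Matrix.of fun r c =>
        if (c : ℕ) = (r : ℕ) then Polynomial.X
        else if (c : ℕ) = (r : ℕ) + 1 then -1
        else 0
    let L : Matrix ((Fin k × Fin m) ⊕ (Fin (k - 1) × Fin m))
        ((Fin k × Fin m) ⊕ (Fin (k - 1) × Fin m)) (Polynomial F) :=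
      Matrix.fromBlocks
        ((Polynomial.X : Polynomial F) • M.map Polynomial.C + Mᵀ.map Polynomial.C)
        (Matrix.kroneckerMap (· * ·) Lφᵀ (1 : Matrix (Fin m) (Fin m) (Polynomial F)))
        (Matrix.kroneckerMap (· * ·) Lψ (1 : Matrix (Fin m) (Fin m) (Polynomial F)))
        0
    let Pm : Matrix (Fin m) (Fin m) (Polynomial F) :=
      Matrix.of fun a b =>
        ∑ i ∈ Finset.range (2 * k), Polynomial.C (P i a b) * Polynomial.X ^ i
    L = (Matrix.of fun i j =>
      Polynomial.C ((L i j).coeff 1) + Polynomial.X * Polynomial.C ((L i j).coeff 0))ᵀ ∧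
    IsLinearization L Pm := by
  obtain ⟨n, rfl⟩ : ∃ n, k = n + 1 := ⟨k - 1, by omega⟩
  exact ⟨pencil_eq_rev_transpose _, isLinearization_pencil P hpal⟩

/-- Concrete T-palindromic linearization of a T-palindromic matrix polynomial
of degree `2k - 1`, obtained by placing the coefficients in the last block
column of `M`. -/
theorem statement16 (m k : ℕ) (hm : 1 ≤ m) (hk : 1 ≤ k)
    (P : ℕ → Matrix (Fin m) (Fin m) F)
    (hpal : ∀ i ≤ 2 * k - 1, P i = (P (2 * k - 1 - i))ᵀ)
    (hdeg : P (2 * k - 1) ≠ 0) :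
    let M : Matrix (Fin k × Fin m) (Fin k × Fin m) F :=
      Matrix.of fun p q =>
        if (q.1 : ℕ) = k - 1 then P (p.1 : ℕ) q.2 p.2 else 0
    let Lφ : Matrix (Fin (k - 1)) (Fin k) (Polynomial F) :=
      Matrix.of fun r c =>
        if (c : ℕ) = (r : ℕ) then 1
        else if (c : ℕ) = (r : ℕ) + 1 then -Polynomial.X
        else 0
    let Lψ : Matrix (Fin (k - 1)) (Fin k) (Polynomial F) :=
      Matrix.of fun r c =>
        if (c : ℕ) = (r : ℕ) then Polynomial.X
        else if (c : ℕ) = (r : ℕ) + 1 then -1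
        else 0
    let L : Matrix ((Fin k × Fin m) ⊕ (Fin (k - 1) × Fin m))
        ((Fin k × Fin m) ⊕ (Fin (k - 1) × Fin m)) (Polynomial F) :=
      Matrix.fromBlocks
        ((Polynomial.X : Polynomial F) • M.map Polynomial.C + Mᵀ.map Polynomial.C)
        (Matrix.kroneckerMap (· * ·) Lφᵀ (1 : Matrix (Fin m) (Fin m) (Polynomial F)))
        (Matrix.kroneckerMap (· * ·) Lψ (1 : Matrix (Fin m) (Fin m) (Polynomial F)))
        0
    let Pm : Matrix (Fin m) (Fin m) (Polynomial F) :=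
      Matrix.of fun a b =>
        ∑ i ∈ Finset.range (2 * k), Polynomial.C (P i a b) * Polynomial.X ^ i
    L = (Matrix.of fun i j =>
      Polynomial.C ((L i j).coeff 1) + Polynomial.X * Polynomial.C ((L i j).coeff 0))ᵀ ∧
    IsLinearization L Pm :=
  statement16_general m k hk P hpal

end PaperLin
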